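/- arXiv:math/0306051 — 2 statements merged into one kernel-verified Lean document; each statement's English description precedes it below -/
import Mathlib

section
/- For all l ∈ ℕ and n ≥ 1, the Schur parameter can be recovered from the orthogonal polynomial and the determinants by γ_{l,n+l} = −φ_n(0,l) · √(D_{l,l+n} / D_{l+1,l+n}). -/
open Polynomial Filter Finset

/-- The complementary quantity `d_{k,j} = (1 - |γ_{k,j}|²)^{1/2}`. -/
noncomputable def dd (γ : ℕ → ℕ → ℂ) (k j : ℕ) : ℝ :=
  Real.sqrt (1 - ‖γ k j‖ ^ 2)

/-- The pair `(φ_n(·,l), φ♯_n(·,l))` of Szegő-type orthogonal polynomials attached to the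
Schur parameters `γ` and the diagonal `s`, defined by the recurrences
`φ_n(X,l) = d_{l,n+l}⁻¹ (X φ_{n-1}(X,l+1) - γ_{l,n+l} φ♯_{n-1}(X,l))` and
`φ♯_n(X,l) = d_{l,n+l}⁻¹ (-conj(γ_{l,n+l}) X φ_{n-1}(X,l+1) + φ♯_{n-1}(X,l))`,
with `φ_0(X,l) = φ♯_0(X,l) = s_l^{-1/2}`. -/
noncomputable def phiPair (s : ℕ → ℝ) (γ : ℕ → ℕ → ℂ) : ℕ → ℕ → Polynomial ℂ × Polynomial ℂ
  | 0, l => (Polynomial.C (((Real.sqrt (s l))⁻¹ : ℝ) : ℂ),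
             Polynomial.C (((Real.sqrt (s l))⁻¹ : ℝ) : ℂ))
  | n + 1, l =>
      (Polynomial.C (((dd γ l (n + 1 + l))⁻¹ : ℝ) : ℂ) *
         (Polynomial.X * (phiPair s γ n (l + 1)).1 -
           Polynomial.C (γ l (n + 1 + l)) * (phiPair s γ n l).2),
       Polynomial.C (((dd γ l (n + 1 + l))⁻¹ : ℝ) : ℂ) *
         (-(Polynomial.C ((starRingEnd ℂ) (γ l (n + 1 + l))) * Polynomial.X *
             (phiPair s γ n (l + 1)).1) +
           (phiPair s γ n l).2))

/-- The orthogonal polynomial `φ_n(X,l)`. -/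
noncomputable def phi (s : ℕ → ℝ) (γ : ℕ → ℕ → ℂ) (n l : ℕ) : Polynomial ℂ :=
  (phiPair s γ n l).1

/-- The reversed polynomial `φ♯_n(X,l)`. -/
noncomputable def phiSharp (s : ℕ → ℝ) (γ : ℕ → ℕ → ℂ) (n l : ℕ) : Polynomial ℂ :=
  (phiPair s γ n l).2

/-- The determinant `D_{r,q} = (∏_{k=r}^q s_k) ∏_{r ≤ k < j ≤ q} d_{k,j}²` of the positive
definite kernel associated with the parameters `γ`. -/
noncomputable def Ddet (s : ℕ → ℝ) (γ : ℕ → ℕ → ℂ) (r q : ℕ) : ℝ :=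
  (∏ k ∈ Finset.Icc r q, s k) *
    ∏ k ∈ Finset.Icc r q, ∏ j ∈ Finset.Icc (k + 1) q, (dd γ k j) ^ 2

/-! At `X = 0` the recurrences collapse: `φ_n(0,l) = -d_{l,n+l}⁻¹ γ_{l,n+l} φ♯_{n-1}(0,l)` and
`φ♯_n(0,l) = (s_l^{1/2} ∏_{j=l+1}^{l+n} d_{l,j})⁻¹`. On the other side, peeling off the row
`k = l` of `D_{l,l+n}` gives `D_{l,l+n} / D_{l+1,l+n} = s_l ∏_{j=l+1}^{l+n} d_{l,j}²`, whose
square root is exactly the inverse of `d_{l,n+l}⁻¹ φ♯_{n-1}(0,l)`. -/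

lemma dd_pos {γ : ℕ → ℕ → ℂ} {k j : ℕ} (h : ‖γ k j‖ < 1) : 0 < dd γ k j :=
  Real.sqrt_pos.2 (by nlinarith [norm_nonneg (γ k j)])

lemma phi_succ_eval_zero (s : ℕ → ℝ) (γ : ℕ → ℕ → ℂ) (n l : ℕ) :
    (phi s γ (n + 1) l).eval 0 =
      -(((dd γ l (n + 1 + l))⁻¹ : ℝ) * γ l (n + 1 + l) * (phiSharp s γ n l).eval 0) := by
  simp only [phi, phiSharp, phiPair, eval_mul, eval_sub, eval_C, eval_X, zero_mul, zero_sub,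
    Complex.ofReal_inv]
  ring

lemma phiSharp_eval_zero (s : ℕ → ℝ) (γ : ℕ → ℕ → ℂ) (n l : ℕ) :
    (phiSharp s γ n l).eval 0 =
      (((Real.sqrt (s l) * ∏ j ∈ Icc (l + 1) (l + n), dd γ l j)⁻¹ : ℝ) : ℂ) := by
  induction n with
  | zero => simp [phiSharp, phiPair]
  | succ n ih =>
    simp only [phiSharp, phiPair] at ih ⊢
    rw [show n + 1 + l = l + n + 1 by omega, ← add_assoc,
      prod_Icc_succ_top (by omega : l + 1 ≤ l + n + 1)]
    simp only [eval_mul, eval_add, eval_neg, eval_C, eval_X, mul_zero, zero_mul, neg_zero,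
      zero_add, ih]
    push_cast
    ring

lemma Ddet_pos {s : ℕ → ℝ} {γ : ℕ → ℕ → ℂ} (hs : ∀ l, 0 < s l)
    (hγ : ∀ k j, k < j → ‖γ k j‖ < 1) (r q : ℕ) : 0 < Ddet s γ r q := by
  refine mul_pos (prod_pos fun k _ => hs k) (prod_pos fun k _ => prod_pos fun j hj => ?_)
  exact pow_pos (dd_pos (hγ k j (by grind))) 2

lemma Ddet_eq_mul_Ddet_succ (s : ℕ → ℝ) (γ : ℕ → ℕ → ℂ) (l q : ℕ) (h : l ≤ q) :
    Ddet s γ l q = s l * (∏ j ∈ Icc (l + 1) q, dd γ l j ^ 2) * Ddet s γ (l + 1) q := by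
  simp only [Ddet]
  rw [Icc_eq_cons_Ioc h, prod_cons, prod_cons, ← Icc_add_one_left_eq_Ioc]
  ring

lemma sqrt_Ddet_div_Ddet_succ {s : ℕ → ℝ} {γ : ℕ → ℕ → ℂ} (hs : ∀ l, 0 < s l)
    (hγ : ∀ k j, k < j → ‖γ k j‖ < 1) (l q : ℕ) (h : l ≤ q) :
    Real.sqrt (Ddet s γ l q / Ddet s γ (l + 1) q) =
      Real.sqrt (s l) * ∏ j ∈ Icc (l + 1) q, dd γ l j := by
  have hD := (Ddet_pos hs hγ (l + 1) q).ne'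
  have hd : ∀ j ∈ Icc (l + 1) q, 0 ≤ dd γ l j := fun j _ => Real.sqrt_nonneg _
  rw [Ddet_eq_mul_Ddet_succ s γ l q h, mul_div_cancel_right₀ _ hD, prod_pow,
    Real.sqrt_mul (hs l).le, Real.sqrt_sq (prod_nonneg hd)]

/-- For all `l ∈ ℕ` and `n ≥ 1`, the Schur parameter can be recovered from the orthogonal
polynomial and the determinants by `γ_{l,n+l} = -φ_n(0,l) √(D_{l,l+n} / D_{l+1,l+n})`. -/
theorem gamma_eq_of_phi_det (s : ℕ → ℝ) (γ : ℕ → ℕ → ℂ)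
    (hs : ∀ l, 0 < s l) (hγ : ∀ k j, k < j → ‖γ k j‖ < 1) (n l : ℕ) (hn : 1 ≤ n) :
    γ l (n + l) =
      -(phi s γ n l).eval 0 *
        ((Real.sqrt (Ddet s γ l (l + n) / Ddet s γ (l + 1) (l + n)) : ℝ) : ℂ) := by
  obtain ⟨m, rfl⟩ : ∃ m, n = m + 1 := ⟨n - 1, by omega⟩
  have hsl : (Real.sqrt (s l) : ℂ) ≠ 0 := by exact_mod_cast (Real.sqrt_pos.2 (hs l)).ne'
  have hP : ∏ j ∈ Icc (l + 1) (l + m), (dd γ l j : ℂ) ≠ 0 :=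
    prod_ne_zero_iff.2 fun j hj => by exact_mod_cast (dd_pos (hγ l j (by grind))).ne'
  have hd : (dd γ l (l + m + 1) : ℂ) ≠ 0 := by exact_mod_cast (dd_pos (hγ l _ (by omega))).ne'
  rw [phi_succ_eval_zero, phiSharp_eval_zero, sqrt_Ddet_div_Ddet_succ hs hγ l _ (by omega),
    ← add_assoc, prod_Icc_succ_top (by omega : l + 1 ≤ l + m + 1),
    show m + 1 + l = l + m + 1 by omega]
  push_cast
  field_simp
end

section
/- Assume the Szegő class condition: for every l ∈ ℕ, the partial products ∏_{p=1}^{m} d_{l,l+p} converge, as m → ∞, to a positive limit. Then for every k, l ∈ ℕ, the series ∑_{n≥0} |φ_n^{(k)}(0,l)|² converges. -/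
open Polynomial Filter Finset

/-!
Fix `k`, `l`, write `d_n = d_{l,n+1+l}`, and let `a_n`, `b_n`, `c_n` be the `k`-th coefficients
of `X φ_n(X,l+1)`, `φ♯_n(X,l)` and `φ_n(X,l)`. Partial products of factors in `[0,1]` converging
to `g > 0` are all `≥ g`, so `d_n ≥ g` and `∑ (1 - d_n) ≤ -log g`; hence
`∑ |γ_{l,n+1+l}|² = ∑ (1 - d_n²) < ∞`. The recurrence for `φ♯` gives
`d_n |b_{n+1}| ≤ |γ| |a_n| + |b_n|`, so `(∏_{p<n} d_p) |b_n|` grows by at most the summable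
`|γ| |a_n|` per step and `b` is bounded by some `M`. The recurrence for `φ` then gives
`g |c_{n+1}| ≤ |a_n| + M |γ|`, which is square summable once `a` is. Since `a_n` is the
`(k-1)`-st coefficient of `φ_n(X,l+1)`, induction on `k` (for all `l`) concludes, and
`φ_n^{(k)}(0,l) = k! c_n`.
-/

section ProductBounds

variable {u : ℕ → ℝ} {g : ℝ}

lemma le_prod_range_of_tendsto (h0 : ∀ n, 0 ≤ u n) (h1 : ∀ n, u n ≤ 1)
    (h : Tendsto (fun m => ∏ p ∈ range m, u p) atTop (nhds g)) (m : ℕ) :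
    g ≤ ∏ p ∈ range m, u p := by
  refine Antitone.le_of_tendsto (antitone_nat_of_succ_le fun n => ?_) h m
  rw [prod_range_succ]
  exact mul_le_of_le_one_right (prod_nonneg fun p _ => h0 p) (h1 n)

lemma le_of_le_prod_range (h0 : ∀ n, 0 ≤ u n) (h1 : ∀ n, u n ≤ 1)
    (hprod : ∀ m, g ≤ ∏ p ∈ range m, u p) (n : ℕ) : g ≤ u n :=
  calc g ≤ ∏ p ∈ range (n + 1), u p := hprod _
    _ = (∏ p ∈ range n, u p) * u n := prod_range_succ _ _
    _ ≤ u n := mul_le_of_le_one_left (h0 n) (prod_le_one (fun p _ => h0 p) fun p _ => h1 p)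

lemma summable_one_sub_of_le_prod_range (hg : 0 < g) (h0 : ∀ n, 0 ≤ u n) (h1 : ∀ n, u n ≤ 1)
    (hprod : ∀ m, g ≤ ∏ p ∈ range m, u p) : Summable fun n => 1 - u n := by
  have hpos : ∀ n, 0 < u n := fun n => hg.trans_le (le_of_le_prod_range h0 h1 hprod n)
  refine summable_of_sum_range_le (c := -Real.log g) (fun n => sub_nonneg.2 (h1 n)) fun m => ?_
  calc ∑ n ∈ range m, (1 - u n) ≤ ∑ n ∈ range m, -Real.log (u n) :=
        sum_le_sum fun n _ => by linarith [Real.log_le_sub_one_of_pos (hpos n)]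
    _ = -Real.log (∏ n ∈ range m, u n) := by
        rw [Real.log_prod fun n _ => (hpos n).ne', sum_neg_distrib]
    _ ≤ -Real.log g := neg_le_neg (Real.log_le_log hg (hprod m))

end ProductBounds

lemma exists_forall_le_of_damped_recurrence {d B e : ℕ → ℝ} {g : ℝ} (hg : 0 < g)
    (hd0 : ∀ n, 0 ≤ d n) (hd1 : ∀ n, d n ≤ 1) (hprod : ∀ m, g ≤ ∏ p ∈ range m, d p) (hB : ∀ n, 0 ≤ B n)
    (he0 : ∀ n, 0 ≤ e n) (he : Summable e) (hrec : ∀ n, d n * B (n + 1) ≤ e n + B n) :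
    ∃ M, ∀ n, B n ≤ M := by
  have hgrowth : ∀ n, (∏ p ∈ range n, d p) * B n ≤ B 0 + ∑ p ∈ range n, e p := by
    intro n
    induction n with
    | zero => simp
    | succ n ih =>
      have hP1 : ∏ p ∈ range n, d p ≤ 1 := prod_le_one (fun p _ => hd0 p) fun p _ => hd1 p
      calc (∏ p ∈ range (n + 1), d p) * B (n + 1)
          = (∏ p ∈ range n, d p) * (d n * B (n + 1)) := by rw [prod_range_succ, mul_assoc]
        _ ≤ (∏ p ∈ range n, d p) * (e n + B n) := by
            gcongr
            · exact prod_nonneg fun p _ => hd0 p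
            · exact hrec n
        _ ≤ e n + (∏ p ∈ range n, d p) * B n := by
            rw [mul_add]
            gcongr
            exact mul_le_of_le_one_left (he0 n) hP1
        _ ≤ B 0 + ∑ p ∈ range (n + 1), e p := by rw [sum_range_succ]; linarith
  refine ⟨(B 0 + ∑' p, e p) / g, fun n => (le_div_iff₀ hg).2 ?_⟩
  calc B n * g ≤ (∏ p ∈ range n, d p) * B n := by
        rw [mul_comm]; exact mul_le_mul_of_nonneg_right (hprod n) (hB n)
    _ ≤ B 0 + ∑ p ∈ range n, e p := hgrowth n
    _ ≤ B 0 + ∑' p, e p := by gcongr; exact he.sum_le_tsum _ fun p _ => he0 p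

section SquareSummable

variable {ι : Type*} {u v : ι → ℝ}

lemma Summable.mul_of_sq (hu : Summable fun i => u i ^ 2) (hv : Summable fun i => v i ^ 2) :
    Summable fun i => u i * v i :=
  ((hu.add hv).div_const 2).of_norm_bounded fun i => by
    rw [Real.norm_eq_abs, abs_mul, le_div_iff₀ two_pos, ← sq_abs (u i), ← sq_abs (v i)]
    linarith [two_mul_le_add_sq |u i| |v i|]

lemma summable_sq_of_abs_le {x : ι → ℝ} (a b : ℝ) (hu : Summable fun i => u i ^ 2)
    (hv : Summable fun i => v i ^ 2) (h : ∀ i, |x i| ≤ a * u i + b * v i) :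
    Summable fun i => x i ^ 2 := by
  refine ((hu.mul_left (2 * a ^ 2)).add (hv.mul_left (2 * b ^ 2))).of_nonneg_of_le
    (fun i => sq_nonneg _) fun i => ?_
  calc x i ^ 2 = |x i| ^ 2 := (sq_abs _).symm
    _ ≤ (a * u i + b * v i) ^ 2 := pow_le_pow_left₀ (abs_nonneg _) (h i) 2
    _ ≤ 2 * a ^ 2 * u i ^ 2 + 2 * b ^ 2 * v i ^ 2 := by
        nlinarith [sq_nonneg (a * u i - b * v i)]

end SquareSummable

lemma Polynomial.iterate_derivative_eval_zero {R : Type*} [Semiring R] (p : R[X]) (k : ℕ) :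
    (derivative^[k] p).eval 0 = k.factorial * p.coeff k := by
  rw [← coeff_zero_eq_eval_zero, coeff_iterate_derivative, zero_add, Nat.descFactorial_self,
    nsmul_eq_mul]

section Szego

variable (s : ℕ → ℝ) (γ : ℕ → ℕ → ℂ)

lemma dd_nonneg (k j : ℕ) : 0 ≤ dd γ k j := Real.sqrt_nonneg _

lemma dd_le_one (k j : ℕ) : dd γ k j ≤ 1 :=
  Real.sqrt_le_one.2 (sub_le_self _ (sq_nonneg _))

lemma norm_sq_le_two_mul_one_sub_dd {k j : ℕ} (h : 0 < dd γ k j) :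
    ‖γ k j‖ ^ 2 ≤ 2 * (1 - dd γ k j) := by
  have hsq : dd γ k j ^ 2 = 1 - ‖γ k j‖ ^ 2 := Real.sq_sqrt (Real.sqrt_pos.1 h).le
  nlinarith [dd_le_one γ k j]

lemma exists_le_prod_dd {l : ℕ} (hSzego : ∃ g : ℝ, 0 < g ∧
      Tendsto (fun m => ∏ p ∈ Icc 1 m, dd γ l (l + p)) atTop (nhds g)) :
    ∃ g : ℝ, 0 < g ∧ ∀ m, g ≤ ∏ n ∈ range m, dd γ l (n + 1 + l) := by
  obtain ⟨g, hg, htend⟩ := hSzego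
  have hreindex : ∀ m, ∏ p ∈ Icc 1 m, dd γ l (l + p) = ∏ n ∈ range m, dd γ l (n + 1 + l) := by
    intro m
    induction m with
    | zero => rfl
    | succ m ih => rw [prod_Icc_succ_top (by omega), ih, prod_range_succ, add_comm l]
  refine ⟨g, hg, le_prod_range_of_tendsto (fun n => dd_nonneg γ _ _) (fun n => dd_le_one γ _ _) ?_⟩
  simpa only [hreindex] using htend

lemma dd_mul_norm_coeff_phi_succ_le {n l : ℕ} (h : 0 < dd γ l (n + 1 + l)) (k : ℕ) :
    dd γ l (n + 1 + l) * ‖(phi s γ (n + 1) l).coeff k‖ ≤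
      ‖(X * phi s γ n (l + 1)).coeff k‖ + ‖γ l (n + 1 + l)‖ * ‖(phiSharp s γ n l).coeff k‖ := by
  have hcoeff : (dd γ l (n + 1 + l) : ℂ) * (phi s γ (n + 1) l).coeff k =
      (X * phi s γ n (l + 1)).coeff k - γ l (n + 1 + l) * (phiSharp s γ n l).coeff k := by
    have : (dd γ l (n + 1 + l) : ℂ) ≠ 0 := Complex.ofReal_ne_zero.2 h.ne'
    simp only [phi, phiSharp, phiPair, coeff_C_mul, coeff_sub, Complex.ofReal_inv]
    field_simp
  have := congrArg norm hcoeff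
  rw [norm_mul, Complex.norm_real, Real.norm_of_nonneg h.le] at this
  rw [this, ← norm_mul]
  exact norm_sub_le _ _

lemma dd_mul_norm_coeff_phiSharp_succ_le {n l : ℕ} (h : 0 < dd γ l (n + 1 + l)) (k : ℕ) :
    dd γ l (n + 1 + l) * ‖(phiSharp s γ (n + 1) l).coeff k‖ ≤
      ‖γ l (n + 1 + l)‖ * ‖(X * phi s γ n (l + 1)).coeff k‖ + ‖(phiSharp s γ n l).coeff k‖ := by
  have hcoeff : (dd γ l (n + 1 + l) : ℂ) * (phiSharp s γ (n + 1) l).coeff k =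
      -(starRingEnd ℂ (γ l (n + 1 + l)) * (X * phi s γ n (l + 1)).coeff k) +
        (phiSharp s γ n l).coeff k := by
    have : (dd γ l (n + 1 + l) : ℂ) ≠ 0 := Complex.ofReal_ne_zero.2 h.ne'
    simp only [phi, phiSharp, phiPair, coeff_C_mul, coeff_add, coeff_neg, mul_assoc,
      Complex.ofReal_inv]
    field_simp
  have := congrArg norm hcoeff
  rw [norm_mul, Complex.norm_real, Real.norm_of_nonneg h.le] at this
  rw [this, ← RCLike.norm_conj (γ l (n + 1 + l)), ← norm_mul, ← norm_neg (_ * _)]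
  exact norm_add_le _ _

lemma summable_sq_norm_coeff_phi_of_summable_X_mul {l k : ℕ} (hSzego : ∃ g : ℝ, 0 < g ∧
      Tendsto (fun m => ∏ p ∈ Icc 1 m, dd γ l (l + p)) atTop (nhds g))
    (hshift : Summable fun n => ‖(X * phi s γ n (l + 1)).coeff k‖ ^ 2) :
    Summable fun n => ‖(phi s γ n l).coeff k‖ ^ 2 := by
  obtain ⟨g, hg, hprod⟩ := exists_le_prod_dd γ hSzego
  have hd0 : ∀ n, 0 ≤ dd γ l (n + 1 + l) := fun n => dd_nonneg γ _ _
  have hd1 : ∀ n, dd γ l (n + 1 + l) ≤ 1 := fun n => dd_le_one γ _ _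
  have hgd : ∀ n, g ≤ dd γ l (n + 1 + l) := le_of_le_prod_range hd0 hd1 hprod
  have hdpos : ∀ n, 0 < dd γ l (n + 1 + l) := fun n => hg.trans_le (hgd n)
  have hγ : Summable fun n => ‖γ l (n + 1 + l)‖ ^ 2 :=
    ((summable_one_sub_of_le_prod_range hg hd0 hd1 hprod).mul_left 2).of_nonneg_of_le
      (fun n => sq_nonneg _) fun n => norm_sq_le_two_mul_one_sub_dd γ (hdpos n)
  obtain ⟨M, hM⟩ := exists_forall_le_of_damped_recurrence hg hd0 hd1 hprod
    (fun n => norm_nonneg ((phiSharp s γ n l).coeff k))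
    (fun n => mul_nonneg (norm_nonneg _) (norm_nonneg _)) (hγ.mul_of_sq hshift)
    fun n => dd_mul_norm_coeff_phiSharp_succ_le s γ (hdpos n) k
  refine (summable_nat_add_iff 1).1 (summable_sq_of_abs_le g⁻¹ (g⁻¹ * M) hshift hγ fun n => ?_)
  have hcoeff_le : g * ‖(phi s γ (n + 1) l).coeff k‖ ≤
      ‖(X * phi s γ n (l + 1)).coeff k‖ + M * ‖γ l (n + 1 + l)‖ :=
    calc g * ‖(phi s γ (n + 1) l).coeff k‖
        ≤ dd γ l (n + 1 + l) * ‖(phi s γ (n + 1) l).coeff k‖ := by gcongr; exact hgd n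
      _ ≤ ‖(X * phi s γ n (l + 1)).coeff k‖ + ‖γ l (n + 1 + l)‖ * ‖(phiSharp s γ n l).coeff k‖ :=
          dd_mul_norm_coeff_phi_succ_le s γ (hdpos n) k
      _ ≤ ‖(X * phi s γ n (l + 1)).coeff k‖ + M * ‖γ l (n + 1 + l)‖ := by
          linarith [mul_le_mul_of_nonneg_left (hM n) (norm_nonneg (γ l (n + 1 + l)))]
  rw [abs_norm]
  linarith [(le_inv_mul_iff₀ hg).2 hcoeff_le]

theorem summable_sq_norm_coeff_phi (hSzego : ∀ l, ∃ g : ℝ, 0 < g ∧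
      Tendsto (fun m => ∏ p ∈ Icc 1 m, dd γ l (l + p)) atTop (nhds g)) (k l : ℕ) :
    Summable fun n => ‖(phi s γ n l).coeff k‖ ^ 2 := by
  induction k generalizing l with
  | zero => exact summable_sq_norm_coeff_phi_of_summable_X_mul s γ (hSzego l) (by simp)
  | succ k ih =>
    exact summable_sq_norm_coeff_phi_of_summable_X_mul s γ (hSzego l)
      (by simpa only [coeff_X_mul] using ih (l + 1))

end Szego

theorem summable_sq_phi_derivative_general (s : ℕ → ℝ) (γ : ℕ → ℕ → ℂ)
    (hSzego : ∀ l, ∃ g : ℝ, 0 < g ∧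
      Filter.Tendsto (fun m => ∏ p ∈ Finset.Icc 1 m, dd γ l (l + p)) Filter.atTop (nhds g))
    (k l : ℕ) :
    Summable (fun n => ‖(Polynomial.derivative^[k] (phi s γ n l)).eval 0‖ ^ 2) := by
  refine ((summable_sq_norm_coeff_phi s γ hSzego k l).mul_left ((k.factorial : ℝ) ^ 2)).congr
    fun n => ?_
  rw [iterate_derivative_eval_zero, norm_mul, mul_pow, Complex.norm_natCast]

/-- Under the Szegő class condition (for every `l`, the partial products `∏_{p=1}^m d_{l,l+p}`
converge to a positive limit), the series `∑_{n≥0} |φ_n^{(k)}(0,l)|²` converges for every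
`k, l ∈ ℕ`. -/
theorem summable_sq_phi_derivative (s : ℕ → ℝ) (γ : ℕ → ℕ → ℂ)
    (hs : ∀ l, 0 < s l) (hγ : ∀ k j, k < j → ‖γ k j‖ < 1)
    (hSzego : ∀ l, ∃ g : ℝ, 0 < g ∧
      Filter.Tendsto (fun m => ∏ p ∈ Finset.Icc 1 m, dd γ l (l + p)) Filter.atTop (nhds g))
    (k l : ℕ) :
    Summable (fun n => ‖(Polynomial.derivative^[k] (phi s γ n l)).eval 0‖ ^ 2) :=
  summable_sq_phi_derivative_general s γ hSzego k l
end
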